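/- For every non-negative integer j ≥ 1, ∫₀¹ arctan(t)·Ti_{2j}(t)/t dt = (1/2) Σ_{k=1}^{2j-1} (-1)^{k-1} β(k+1) β(2j-k+1), where Ti_m is the inverse tangent integral and β is the Dirichlet beta function. -/

import Mathlib

open Real Finset

/-- Inverse tangent integral `Ti_m(t) = ∑_{n=1}^∞ (-1)^{n-1} t^{2n-1}/(2n-1)^m`. -/
noncomputable def Ti (m : ℕ) (t : ℝ) : ℝ := ∑' n : ℕ, (-1)^n * t^(2*n+1) / ((2*(n:ℝ)+1))^m

/-- Dirichlet beta function `β(s) = ∑_{n=1}^∞ (-1)^{n-1}/(2n-1)^s`. -/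
noncomputable def dbeta (s : ℕ) : ℝ := ∑' n : ℕ, (-1)^n / ((2*(n:ℝ)+1))^s

/-!
Expand `arctan t` and `Ti_{2j}(t) / t` in power series; the product series converges absolutely
for `0 < t < 1` and its termwise integrals are absolutely summable, so the integral equals
`∑_{n,k} (-1)^(n+k) / (A B^(2j) (A + B))` with `A = 2n + 1`, `B = 2k + 1`. On the other side,
`β(k+1) β(2j-k+1)` is the absolutely convergent double series of
`(-1)^(n+k) / (A^(k+1) B^(2j-k+1))`, and the alternating sum over `k` of these terms is a geometric
sum equal to `(1 / (A B^(2j)) + 1 / (A^(2j) B)) / (A + B)`. Swapping `n` and `k` exchanges the two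
terms, so the right-hand sum is twice the double series.
-/

open MeasureTheory

lemma summable_inv_two_mul_add_one_pow {s : ℕ} (hs : 2 ≤ s) :
    Summable fun n : ℕ => ((2 * (n : ℝ) + 1) ^ s)⁻¹ := by
  have h := (summable_nat_add_iff 1).2 (Real.summable_nat_pow_inv.2 hs)
  refine h.of_nonneg_of_le (fun n => by positivity) fun n => inv_anti₀ (by positivity) ?_
  push_cast
  gcongr
  linarith

lemma summable_norm_neg_one_pow_div {s : ℕ} (hs : 2 ≤ s) :
    Summable fun n : ℕ => ‖(-1 : ℝ) ^ n / (2 * (n : ℝ) + 1) ^ s‖ :=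
  (summable_inv_two_mul_add_one_pow hs).congr fun n => by
    rw [norm_div, norm_pow, norm_neg, norm_one, one_pow, one_div, norm_pow,
      Real.norm_of_nonneg (by positivity)]

lemma hasSum_dbeta_mul_dbeta {a b : ℕ} (ha : 2 ≤ a) (hb : 2 ≤ b) :
    HasSum (fun p : ℕ × ℕ => (-1 : ℝ) ^ p.1 / (2 * (p.1 : ℝ) + 1) ^ a *
      ((-1) ^ p.2 / (2 * (p.2 : ℝ) + 1) ^ b)) (dbeta a * dbeta b) := by
  have hfa := summable_norm_neg_one_pow_div ha
  have hfb := summable_norm_neg_one_pow_div hb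
  exact (hfa.of_norm.hasSum.mul hfb.of_norm.hasSum (summable_mul_of_summable_norm hfa hfb) :)

lemma summable_norm_neg_one_pow_mul_pow_div {t : ℝ} (ht : ‖t‖ < 1) (e s : ℕ) :
    Summable fun n : ℕ => ‖(-1 : ℝ) ^ n * t ^ (2 * n + e) / (2 * (n : ℝ) + 1) ^ s‖ := by
  refine (summable_geometric_of_lt_one (by positivity) (pow_lt_one₀ (norm_nonneg t) ht
    two_ne_zero)).of_nonneg_of_le (fun n => norm_nonneg _) fun n => ?_
  have hn : (1 : ℝ) ≤ 2 * n + 1 := by linarith [n.cast_nonneg (α := ℝ)]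
  simp only [norm_div, norm_mul, norm_pow, norm_neg, norm_one, one_pow, one_mul,
    Real.norm_of_nonneg (zero_le_one.trans hn), ← pow_mul]
  calc ‖t‖ ^ (2 * n + e) / (2 * (n : ℝ) + 1) ^ s ≤ ‖t‖ ^ (2 * n + e) :=
        div_le_self (by positivity) (one_le_pow₀ hn)
    _ ≤ ‖t‖ ^ (2 * n) := pow_le_pow_of_le_one (norm_nonneg t) ht.le (by omega)

noncomputable def arctanTiCoeff (m : ℕ) (p : ℕ × ℕ) : ℝ :=
  (-1) ^ (p.1 + p.2) / ((2 * (p.1 : ℝ) + 1) * (2 * (p.2 : ℝ) + 1) ^ m)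

lemma hasSum_arctan_mul_Ti_div (m : ℕ) {t : ℝ} (ht0 : t ≠ 0) (ht : ‖t‖ < 1) :
    HasSum (fun p : ℕ × ℕ => arctanTiCoeff m p * t ^ (2 * p.1 + 2 * p.2 + 1))
      (arctan t * Ti m t / t) := by
  have harctan := Real.hasSum_arctan ht
  push_cast at harctan
  have hfa := summable_norm_neg_one_pow_mul_pow_div ht 1 1
  have hfb := summable_norm_neg_one_pow_mul_pow_div ht 1 m
  simp only [pow_one] at hfa
  have hTi : HasSum (fun n : ℕ => (-1 : ℝ) ^ n * t ^ (2 * n + 1) / (2 * (n : ℝ) + 1) ^ m)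
      (Ti m t) := hfb.of_norm.hasSum
  have hprod : Summable fun p : ℕ × ℕ =>
      (-1 : ℝ) ^ p.1 * t ^ (2 * p.1 + 1) / (2 * (p.1 : ℝ) + 1) *
        ((-1 : ℝ) ^ p.2 * t ^ (2 * p.2 + 1) / (2 * (p.2 : ℝ) + 1) ^ m) :=
    summable_mul_of_summable_norm hfa hfb
  have hterm : ∀ p : ℕ × ℕ, arctanTiCoeff m p * t ^ (2 * p.1 + 2 * p.2 + 1) =
      (-1 : ℝ) ^ p.1 * t ^ (2 * p.1 + 1) / (2 * (p.1 : ℝ) + 1) *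
        ((-1 : ℝ) ^ p.2 * t ^ (2 * p.2 + 1) / (2 * (p.2 : ℝ) + 1) ^ m) / t := fun p => by
    rw [arctanTiCoeff]
    field_simp
    ring
  rw [funext hterm]
  exact (harctan.mul hTi hprod).div_const t

lemma summable_arctanTiCoeff_div {m : ℕ} (hm : 2 ≤ m) :
    Summable fun p : ℕ × ℕ =>
      ‖arctanTiCoeff m p‖ / (2 * (p.1 : ℝ) + 1 + (2 * p.2 + 1)) := by
  refine ((summable_inv_two_mul_add_one_pow le_rfl).mul_of_nonneg
    (summable_inv_two_mul_add_one_pow hm) (fun n => by positivity) fun n => by positivity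
    ).of_nonneg_of_le (fun p => by positivity) fun ⟨a, b⟩ => ?_
  rw [arctanTiCoeff, norm_div, norm_pow, norm_neg, norm_one, one_pow,
    Real.norm_of_nonneg (by positivity), ← mul_inv, div_div, one_div]
  apply inv_anti₀ (by positivity)
  dsimp only
  have : 0 ≤ (2 * (a : ℝ) + 1) * (2 * (b : ℝ) + 1) ^ m * (2 * b + 1) := by positivity
  linarith

lemma integral_Ioo_zero_one_const_mul_pow (c : ℝ) (N : ℕ) :
    ∫ x in Set.Ioo (0 : ℝ) 1, c * x ^ N = c / (N + 1) := by
  rw [integral_const_mul, ← integral_Ioc_eq_integral_Ioo,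
    ← intervalIntegral.integral_of_le zero_le_one, integral_pow]
  simp [div_eq_mul_inv]

lemma integral_arctan_mul_Ti_div {m : ℕ} (hm : 2 ≤ m) :
    ∫ t in (0 : ℝ)..1, arctan t * Ti m t / t =
      ∑' p : ℕ × ℕ, arctanTiCoeff m p / (2 * (p.1 : ℝ) + 1 + (2 * p.2 + 1)) := by
  set F : ℕ × ℕ → ℝ → ℝ := fun p x => arctanTiCoeff m p * x ^ (2 * p.1 + 2 * p.2 + 1)
  have hdeg : ∀ p : ℕ × ℕ,
      ((2 * p.1 + 2 * p.2 + 1 : ℕ) : ℝ) + 1 = 2 * p.1 + 1 + (2 * p.2 + 1) := fun p => by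
    push_cast; ring
  have hF : ∀ p, ∫ x in Set.Ioo (0 : ℝ) 1, F p x =
      arctanTiCoeff m p / (2 * p.1 + 1 + (2 * p.2 + 1)) := fun p => by
    rw [integral_Ioo_zero_one_const_mul_pow, hdeg]
  have hF_norm : ∀ p, ∫ x in Set.Ioo (0 : ℝ) 1, ‖F p x‖ =
      ‖arctanTiCoeff m p‖ / (2 * p.1 + 1 + (2 * p.2 + 1)) := fun p => by
    rw [← hdeg, ← integral_Ioo_zero_one_const_mul_pow]
    refine setIntegral_congr_fun measurableSet_Ioo fun x hx => ?_
    rw [norm_mul, norm_pow, Real.norm_of_nonneg hx.1.le]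
  have hF_int : ∀ p, Integrable (F p) (volume.restrict (Set.Ioo 0 1)) := fun p =>
    (continuous_const.mul (continuous_pow _)).integrableOn_Icc.mono_set Set.Ioo_subset_Icc_self
  have hsum := hasSum_integral_of_summable_integral_norm hF_int
    ((summable_arctanTiCoeff_div hm).congr fun p => (hF_norm p).symm)
  rw [← (funext hF), hsum.tsum_eq, intervalIntegral.integral_of_le zero_le_one,
    integral_Ioc_eq_integral_Ioo]
  refine setIntegral_congr_fun measurableSet_Ioo fun t ht => ?_
  exact ((hasSum_arctan_mul_Ti_div m ht.1.ne' (by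
    rw [Real.norm_of_nonneg ht.1.le]; exact ht.2)).tsum_eq).symm

lemma sum_Icc_neg_one_pow_div_pow_mul_pow {K : Type*} [Field K] {A B : K} (hA : A ≠ 0)
    (hB : B ≠ 0) (hAB : A + B ≠ 0) {j : ℕ} (hj : 1 ≤ j) :
    ∑ k ∈ Icc 1 (2 * j - 1), (-1) ^ (k - 1) / (A ^ (k + 1) * B ^ (2 * j - k + 1)) =
      (1 / (A * B ^ (2 * j)) + 1 / (A ^ (2 * j) * B)) / (A + B) := by
  obtain ⟨n, rfl⟩ : ∃ n, j = n + 1 := ⟨j - 1, by omega⟩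
  have hIcc : Icc 1 (2 * (n + 1) - 1) = Ico 1 (2 * n + 2) := by ext; simp; omega
  have hterm : ∀ i ∈ range (2 * n + 1),
      (-1 : K) ^ (1 + i - 1) / (A ^ (1 + i + 1) * B ^ (2 * (n + 1) - (1 + i) + 1)) =
        (-B) ^ i * A ^ (2 * n + 1 - 1 - i) / (A ^ (2 * n + 2) * B ^ (2 * n + 2)) := by
    intro i hi
    obtain ⟨a, ha⟩ : ∃ a, 2 * n = i + a := ⟨2 * n - i, by simp at hi; omega⟩
    rw [show 1 + i - 1 = i by omega, show 1 + i + 1 = i + 2 by omega,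
      show 2 * (n + 1) - (1 + i) + 1 = a + 2 by omega, show 2 * n + 1 - 1 - i = a by omega,
      show 2 * n + 2 = i + a + 2 by omega, neg_pow]
    field_simp
    ring
  rw [hIcc, sum_Ico_eq_sum_range, show 2 * n + 2 - 1 = 2 * n + 1 by omega, sum_congr rfl hterm,
    ← sum_div]
  -- over the common denominator `A^(2j) B^(2j)` the sum is `∑ (-B)^i A^(2j-2-i)`, a geometric sum
  have hgeom := geom_sum₂_mul (-B) A (2 * n + 1)
  rw [Odd.neg_pow ⟨n, rfl⟩] at hgeom
  have hsum : ∑ i ∈ range (2 * n + 1), (-B) ^ i * A ^ (2 * n + 1 - 1 - i) =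
      (A ^ (2 * n + 1) + B ^ (2 * n + 1)) / (A + B) := by
    rw [eq_div_iff hAB]; linear_combination -hgeom
  rw [hsum]
  field_simp
  ring

lemma sum_Icc_neg_one_pow_mul_dbeta_mul_dbeta {j : ℕ} (hj : 1 ≤ j) :
    ∑ k ∈ Icc 1 (2 * j - 1), (-1) ^ (k - 1) * dbeta (k + 1) * dbeta (2 * j - k + 1) =
      2 * ∑' p : ℕ × ℕ, arctanTiCoeff (2 * j) p / (2 * (p.1 : ℝ) + 1 + (2 * p.2 + 1)) := by
  set c : ℕ × ℕ → ℝ := fun p =>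
    arctanTiCoeff (2 * j) p / (2 * (p.1 : ℝ) + 1 + (2 * p.2 + 1))
  have hc : Summable c := ((summable_arctanTiCoeff_div (m := 2 * j) (by omega)).congr fun p => by
    rw [norm_div, Real.norm_of_nonneg (by positivity : (0 : ℝ) ≤ 2 * p.1 + 1 + (2 * p.2 + 1))]
    ).of_norm
  have hc_swap : HasSum (fun p : ℕ × ℕ => c p.swap) (∑' p, c p) :=
    (Equiv.prodComm ℕ ℕ).hasSum_iff.2 hc.hasSum
  have hprod := hasSum_sum fun k (hk : k ∈ Icc 1 (2 * j - 1)) =>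
    (hasSum_dbeta_mul_dbeta (a := k + 1) (b := 2 * j - k + 1) (by simp at hk; omega)
      (by simp at hk; omega)).mul_left ((-1) ^ (k - 1))
  have hsymm : ∀ p : ℕ × ℕ, ∑ k ∈ Icc 1 (2 * j - 1), (-1) ^ (k - 1) *
      ((-1) ^ p.1 / (2 * (p.1 : ℝ) + 1) ^ (k + 1) *
        ((-1) ^ p.2 / (2 * (p.2 : ℝ) + 1) ^ (2 * j - k + 1))) = c p + c p.swap := by
    rintro ⟨a, b⟩
    simp only [c, arctanTiCoeff, Prod.fst_swap, Prod.snd_swap]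
    have hA : (0 : ℝ) < 2 * a + 1 := by positivity
    have hB : (0 : ℝ) < 2 * b + 1 := by positivity
    generalize 2 * (a : ℝ) + 1 = A at hA ⊢
    generalize 2 * (b : ℝ) + 1 = B at hB ⊢
    rw [sum_congr rfl fun k _ => show (-1 : ℝ) ^ (k - 1) * ((-1) ^ a / A ^ (k + 1) *
        ((-1) ^ b / B ^ (2 * j - k + 1))) =
        (-1) ^ (a + b) * ((-1) ^ (k - 1) / (A ^ (k + 1) * B ^ (2 * j - k + 1))) by ring,
      ← mul_sum, sum_Icc_neg_one_pow_div_pow_mul_pow hA.ne' hB.ne' (by positivity) hj]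
    field_simp
    ring
  simp only [mul_assoc]
  rw [hprod.unique ((hc.hasSum.add hc_swap).congr_fun hsymm), two_mul]

theorem stmt_5 (j : ℕ) (hj : 1 ≤ j) :
    ∫ t in (0:ℝ)..1, Real.arctan t * Ti (2*j) t / t =
      (1/2) * ∑ k ∈ Finset.Icc 1 (2*j-1), (-1)^(k-1) * dbeta (k+1) * dbeta (2*j-k+1) := by
  rw [integral_arctan_mul_Ti_div (by omega), sum_Icc_neg_one_pow_mul_dbeta_mul_dbeta hj]
  ring
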